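/- For 0 < |p| < 1 and z ∈ ℂ×, the theta function vanishes exactly on the cyclic group generated by p: θ_p(z) = 0 if and only if z = p^k for some integer k. -/

import Mathlib

open Complex

/-- The infinite `q`-Pochhammer symbol `(z; p)_∞ = ∏_{n≥0} (1 − z pⁿ)`. -/
noncomputable def pochInf (p z : ℂ) : ℂ := ∏' n : ℕ, (1 - z * p ^ n)

/-- Jacobi's odd theta function `θ_p(z) = (z; p)_∞ (p/z; p)_∞`. -/
noncomputable def theta (p z : ℂ) : ℂ := pochInf p z * pochInf p (p / z)

/-! The zeros of `(z; p)_∞` are those of its factors, because `∑ ‖z pⁿ‖` converges; so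
`θ_p(z)` vanishes iff `z = p⁻ⁿ` or `p / z = p⁻ⁿ` for some `n : ℕ`, and these are the integer
powers `p^k` with `k ≤ 0` and `k ≥ 1` respectively. -/

theorem Int.exists_iff_exists_neg_natCast_or_natCast_add_one {P : ℤ → Prop} :
    (∃ k, P k) ↔ (∃ n : ℕ, P (-n)) ∨ ∃ n : ℕ, P (n + 1) := by
  constructor
  · rintro ⟨k, hk⟩
    obtain ⟨n, rfl | rfl⟩ := Int.eq_nat_or_neg k
    · cases n with
      | zero => exact .inl ⟨0, by simpa using hk⟩
      | succ m => exact .inr ⟨m, by simpa using hk⟩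
    · exact .inl ⟨n, hk⟩
  · rintro (⟨n, hn⟩ | ⟨n, hn⟩)
    exacts [⟨_, hn⟩, ⟨_, hn⟩]

section CommGroupWithZero

variable {G : Type*} [CommGroupWithZero G] {p z : G}

theorem mul_pow_eq_one_iff_eq_zpow_neg (hp : p ≠ 0) (n : ℕ) :
    z * p ^ n = 1 ↔ z = p ^ (-n : ℤ) := by
  rw [zpow_neg, zpow_natCast, mul_eq_one_iff_eq_inv₀ (pow_ne_zero n hp)]

theorem div_mul_pow_eq_one_iff_eq_zpow_add_one (hz : z ≠ 0) (n : ℕ) :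
    p / z * p ^ n = 1 ↔ z = p ^ (n + 1 : ℤ) := by
  rw [div_mul_eq_mul_div, div_eq_one_iff_eq hz, eq_comm, ← pow_succ', ← zpow_natCast,
    Nat.cast_succ]

end CommGroupWithZero

theorem pochInf_eq_zero_iff {p : ℂ} (hp : ‖p‖ < 1) (z : ℂ) :
    pochInf p z = 0 ↔ ∃ n : ℕ, z * p ^ n = 1 := by
  constructor
  · contrapose!
    intro h
    have hsummable : Summable fun n : ℕ => ‖-(z * p ^ n)‖ := by
      simpa using (summable_geometric_of_lt_one (norm_nonneg p) hp).mul_left ‖z‖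
    have hfactor (n : ℕ) : 1 + -(z * p ^ n) ≠ 0 := by
      rw [← sub_eq_add_neg, sub_ne_zero]
      exact (h n).symm
    simpa only [pochInf, ← sub_eq_add_neg] using
      tprod_one_add_ne_zero_of_summable hfactor hsummable
  · rintro ⟨n, hn⟩
    exact tprod_of_exists_eq_zero ⟨n, by rw [hn, sub_self]⟩

/-- For `0 < |p| < 1` and `z ∈ ℂ×`, `θ_p(z) = 0` iff `z = pᵏ` for some `k ∈ ℤ`. -/
theorem theta_zero_iff (p : ℂ) (hp0 : 0 < ‖p‖)
    (hp1 : ‖p‖ < 1) (z : ℂ) (hz : z ≠ 0) :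
    theta p z = 0 ↔ ∃ k : ℤ, z = p ^ k := by
  have hp : p ≠ 0 := norm_pos_iff.mp hp0
  simp only [theta, mul_eq_zero, pochInf_eq_zero_iff hp1,
    div_mul_pow_eq_one_iff_eq_zpow_add_one hz, mul_pow_eq_one_iff_eq_zpow_neg hp]
  exact (Int.exists_iff_exists_neg_natCast_or_natCast_add_one (P := (z = p ^ ·))).symm
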